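/- Let A be a bounded operator on a complex Hilbert space with polar decomposition A = U|A|. Then A is semi-hyponormal (|A*| ≤ |A|) if and only if |⟨Ax, y⟩| ≤ ‖|A|^{1/2}x‖ · ‖|A|^{1/2}y‖ for all x, y ∈ H. -/

import Mathlib

open ContinuousLinearMap Set

set_option synthInstance.maxHeartbeats 1000000

/-! Write `T = |A|` and `S = T^{1/2}`. The polar decomposition gives `⟪A x, y⟫ = ⟪S x, S U* y⟫`,
and `|A*| = U T U*` gives `⟪|A*| y, y⟫ = ‖S U* y‖²` next to `⟪|A| y, y⟫ = ‖S y‖²`. So both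
conditions say `‖S U* y‖ ≤ ‖S y‖` for all `y`: one direction is Cauchy–Schwarz, the other is
the choice `x = U* y`. -/

namespace ContinuousLinearMap

lemma le_iff_re_inner_le {𝕜 E : Type*} [RCLike 𝕜] [NormedAddCommGroup E] [InnerProductSpace 𝕜 E]
    [CompleteSpace E] {R T : E →L[𝕜] E} (hR : IsSelfAdjoint R) (hT : IsSelfAdjoint T) :
    R ≤ T ↔ ∀ x, RCLike.re (inner 𝕜 (R x) x) ≤ RCLike.re (inner 𝕜 (T x) x) := by
  simp only [le_def, isPositive_def', hT.sub hR, true_and, reApplyInnerSelf_apply, sub_apply,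
    inner_sub_left, map_sub, sub_nonneg]

variable {H : Type*} [NormedAddCommGroup H] [InnerProductSpace ℂ H] [CompleteSpace H]

lemma inner_apply_eq_inner_sqrt {T : H →L[ℂ] H} (hT : 0 ≤ T) (x y : H) :
    inner ℂ (T x) y = inner ℂ (CFC.sqrt T x) (CFC.sqrt T y) := by
  have hS : IsSelfAdjoint (CFC.sqrt T) := (CFC.sqrt_nonneg T).isSelfAdjoint
  conv_lhs => rw [← CFC.sqrt_mul_sqrt_self T hT, mul_apply_eq_comp]
  rw [← adjoint_inner_right, ← star_eq_adjoint, hS.star_eq]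

lemma re_inner_apply_self_eq_norm_sqrt_sq {T : H →L[ℂ] H} (hT : 0 ≤ T) (x : H) :
    RCLike.re (inner ℂ (T x) x) = ‖CFC.sqrt T x‖ ^ 2 := by
  rw [inner_apply_eq_inner_sqrt hT, inner_self_eq_norm_sq]

lemma conj_adjoint_le_iff_norm_sqrt_le {T : H →L[ℂ] H} (hT : 0 ≤ T) (U : H →L[ℂ] H) :
    U * T * adjoint U ≤ T ↔ ∀ y, ‖CFC.sqrt T (adjoint U y)‖ ≤ ‖CFC.sqrt T y‖ := by
  have hUTU : 0 ≤ U * T * adjoint U := by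
    rw [← star_eq_adjoint]; exact star_right_conjugate_nonneg hT U
  rw [le_iff_re_inner_le hUTU.isSelfAdjoint hT.isSelfAdjoint]
  refine forall_congr' fun y => ?_
  rw [mul_apply_eq_comp, mul_apply_eq_comp, ← adjoint_inner_right,
    re_inner_apply_self_eq_norm_sqrt_sq hT, re_inner_apply_self_eq_norm_sqrt_sq hT]
  exact pow_le_pow_iff_left₀ (norm_nonneg _) (norm_nonneg _) two_ne_zero

lemma norm_inner_mul_apply_le_iff_norm_sqrt_le {T : H →L[ℂ] H} (hT : 0 ≤ T) (U : H →L[ℂ] H) :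
    (∀ x y, ‖inner ℂ ((U * T) x) y‖ ≤ ‖CFC.sqrt T x‖ * ‖CFC.sqrt T y‖) ↔
      ∀ y, ‖CFC.sqrt T (adjoint U y)‖ ≤ ‖CFC.sqrt T y‖ := by
  have key (x y : H) :
      inner ℂ ((U * T) x) y = inner ℂ (CFC.sqrt T x) (CFC.sqrt T (adjoint U y)) := by
    rw [mul_apply_eq_comp, ← adjoint_inner_right, inner_apply_eq_inner_sqrt hT]
  refine ⟨fun h y => ?_, fun h x y => ?_⟩
  · have hy := h (adjoint U y) y
    rw [key, ← inner_self_re_eq_norm, inner_self_eq_norm_sq, sq] at hy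
    nlinarith [norm_nonneg (CFC.sqrt T (adjoint U y)), norm_nonneg (CFC.sqrt T y)]
  · rw [key]
    exact (norm_inner_le_norm _ _).trans (mul_le_mul_of_nonneg_left (h y) (norm_nonneg _))

end ContinuousLinearMap

theorem semihyponormal_iff_sqrt_ineq_general {H : Type*} [NormedAddCommGroup H]
    [InnerProductSpace ℂ H] [CompleteSpace H] (A U : H →L[ℂ] H)
    (hpolar : A = U * CFC.sqrt (adjoint A * A))
    (hpow : ∀ t : ℝ, 0 < t →
      U * CFC.rpow (CFC.sqrt (adjoint A * A)) t * adjoint U =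
        CFC.rpow (CFC.sqrt (A * adjoint A)) t) :
    CFC.sqrt (A * adjoint A) ≤ CFC.sqrt (adjoint A * A) ↔
      ∀ x y : H, ‖(inner ℂ (A x) y : ℂ)‖ ≤
        ‖CFC.sqrt (CFC.sqrt (adjoint A * A)) x‖ *
          ‖CFC.sqrt (CFC.sqrt (adjoint A * A)) y‖ := by
  have hT : 0 ≤ CFC.sqrt (adjoint A * A) := CFC.sqrt_nonneg _
  have hconj : U * CFC.sqrt (adjoint A * A) * adjoint U = CFC.sqrt (A * adjoint A) := by
    simpa only [CFC.rpow_eq_pow, CFC.rpow_one _ hT,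
      CFC.rpow_one (CFC.sqrt (A * adjoint A)) (CFC.sqrt_nonneg _)] using hpow 1 one_pos
  rw [← hconj, conj_adjoint_le_iff_norm_sqrt_le hT,
    ← norm_inner_mul_apply_le_iff_norm_sqrt_le hT, ← hpolar]

theorem semihyponormal_iff_sqrt_ineq {H : Type*} [NormedAddCommGroup H]
    [InnerProductSpace ℂ H] [CompleteSpace H] (A U : H →L[ℂ] H)
    (hpolar : A = U * CFC.sqrt (adjoint A * A))
    (hPI : U * adjoint U * U = U)
    (hker : LinearMap.ker (U : H →ₗ[ℂ] H) = LinearMap.ker (A : H →ₗ[ℂ] H))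
    (hpow : ∀ t : ℝ, 0 < t →
      U * CFC.rpow (CFC.sqrt (adjoint A * A)) t * adjoint U =
        CFC.rpow (CFC.sqrt (A * adjoint A)) t) :
    CFC.sqrt (A * adjoint A) ≤ CFC.sqrt (adjoint A * A) ↔
      ∀ x y : H, ‖(inner ℂ (A x) y : ℂ)‖ ≤
        ‖CFC.sqrt (CFC.sqrt (adjoint A * A)) x‖ *
          ‖CFC.sqrt (CFC.sqrt (adjoint A * A)) y‖ :=
  semihyponormal_iff_sqrt_ineq_general A U hpolar hpow
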